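/- Let 0 < r < 1 and let μ be a finite positive Borel measure on ℂ whose support is contained in the closed disk {w ∈ ℂ : |w| ≤ r}. Then for every f in the disk algebra A(𝔻), ∫_ℂ f dμ = ∬_{𝔻} f(z) M(z) dx dy, where M(z) = (1/π) ∫_ℂ 1/(1 − conj(z)·w)² dμ(w) and z = x + iy ranges over the open unit disk 𝔻. -/

import Mathlib

/-!
For `‖w‖ < 1` the kernel reproduces holomorphic functions:
`∫_𝔻 f(z) (1 - z̄ w)⁻² dA(z) = π f(w)`. In polar coordinates, on the circle `|z| = ρ` one has
`z̄ = ρ² / z`, so the kernel becomes `z² / (z - ρ² w)²` and Cauchy's formula for the derivative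
of `z f(z)` gives the circle average `f(ρ² w) + ρ² w f'(ρ² w)`. This is `(2πρ)⁻¹` times the
`ρ`-derivative of `π ρ² f(ρ² w)`, so the radial integral over `(0, 1)` is `π f(w)`.
Since `μ` lives on `|w| ≤ r < 1`, where the kernel is bounded, Fubini's theorem lets us integrate
the reproducing formula against `μ`.
-/

open Complex MeasureTheory Metric Real Set ComplexConjugate

section PolarCoordinates

variable {E : Type*} [NormedAddCommGroup E] [NormedSpace ℝ E]

lemma Complex.polarCoord_symm_eq_circleMap (p : ℝ × ℝ) :
    Complex.polarCoord.symm p = circleMap 0 p.1 p.2 := by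
  rw [Complex.polarCoord_symm_apply, circleMap_zero, exp_mul_I, ← ofReal_cos, ← ofReal_sin]

lemma Complex.integrableOn_polarCoord_target {F : ℂ → E} (hF : Integrable F) :
    IntegrableOn (fun p : ℝ × ℝ => p.1 • F (Complex.polarCoord.symm p)) polarCoord.target := by
  have hsource : IntegrableOn (F ∘ measurableEquivRealProd.symm)
      (polarCoord.symm '' polarCoord.target) :=
    ((volume_preserving_equiv_real_prod.symm).integrable_comp_emb
      measurableEquivRealProd.symm.measurableEmbedding |>.mpr hF).integrableOn
  rw [integrableOn_image_iff_integrableOn_abs_det_fderiv_smul volume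
    polarCoord.open_target.measurableSet
    (fun p _ => (hasFDerivAt_polarCoord_symm p).hasFDerivWithinAt) polarCoord.symm.injOn] at hsource
  refine hsource.congr_fun (fun p hp => ?_) polarCoord.open_target.measurableSet
  have hp1 : 0 < p.1 := (polarCoord_target ▸ hp).1
  simp only [Function.comp_apply, det_fderivPolarCoordSymm, abs_of_pos hp1]
  rfl

lemma Real.circleAverage_eq_integral_Ioo [CompleteSpace E] (f : ℂ → E) (c : ℂ) (R : ℝ) :
    circleAverage f c R = (2 * π)⁻¹ • ∫ θ in Ioo (-π) π, f (circleMap c R θ) := by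
  rw [circleAverage_eq_integral_add (-π), intervalIntegral.integral_comp_add_right
    (fun θ => f (circleMap c R θ)), intervalIntegral.integral_of_le (by linarith [pi_pos]),
    integral_Ioc_eq_integral_Ioo]
  ring_nf

theorem integral_ball_eq_integral_smul_circleAverage [CompleteSpace E] {F : ℂ → E} {R : ℝ}
    (hF : IntegrableOn F (ball 0 R)) :
    ∫ z in ball (0 : ℂ) R, F z = ∫ ρ in Ioo 0 R, (2 * π * ρ) • circleAverage F 0 ρ := by
  have hS : MeasurableSet (Ioo 0 R ×ˢ Ioo (-π) π) := measurableSet_Ioo.prod measurableSet_Ioo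
  have hStarget : Ioo 0 R ×ˢ Ioo (-π) π ⊆ polarCoord.target := by
    rw [polarCoord_target]
    exact prod_mono Ioo_subset_Ioi_self subset_rfl
  have hpolar : EqOn (fun p : ℝ × ℝ => p.1 • (ball 0 R).indicator F (Complex.polarCoord.symm p))
      ((Ioo 0 R ×ˢ Ioo (-π) π).indicator fun p => p.1 • F (circleMap 0 p.1 p.2))
      polarCoord.target := by
    intro p hp
    rw [polarCoord_target] at hp
    obtain ⟨hρ, hθ⟩ := hp
    have hnorm : ‖Complex.polarCoord.symm p‖ = p.1 := by
      rw [norm_polarCoord_symm, abs_of_pos hρ]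
    dsimp only
    by_cases hρR : p.1 < R
    · rw [indicator_of_mem (mem_ball_zero_iff.mpr (hnorm ▸ hρR)),
        indicator_of_mem (show p ∈ Ioo 0 R ×ˢ Ioo (-π) π from ⟨⟨hρ, hρR⟩, hθ⟩),
        Complex.polarCoord_symm_eq_circleMap]
    · rw [indicator_of_notMem (fun h => hρR (hnorm ▸ mem_ball_zero_iff.mp h)),
        indicator_of_notMem fun h => hρR h.1.2, smul_zero]
  have hSint : IntegrableOn (fun p : ℝ × ℝ => p.1 • F (circleMap 0 p.1 p.2))
      (Ioo 0 R ×ˢ Ioo (-π) π) := by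
    have := (Complex.integrableOn_polarCoord_target
      ((integrable_indicator_iff measurableSet_ball).mpr hF)).congr_fun hpolar
      polarCoord.open_target.measurableSet
    exact (this.mono_set hStarget).congr_fun (fun p hp => indicator_of_mem hp _) hS
  calc ∫ z in ball (0 : ℂ) R, F z
      = ∫ p in polarCoord.target, p.1 • (ball 0 R).indicator F (Complex.polarCoord.symm p) := by
        rw [Complex.integral_comp_polarCoord_symm, integral_indicator measurableSet_ball]
    _ = ∫ p in Ioo 0 R ×ˢ Ioo (-π) π, p.1 • F (circleMap 0 p.1 p.2) := by
        rw [setIntegral_congr_fun polarCoord.open_target.measurableSet hpolar,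
          setIntegral_indicator hS, inter_eq_right.mpr hStarget]
    _ = ∫ ρ in Ioo 0 R, ∫ θ in Ioo (-π) π, ρ • F (circleMap 0 ρ θ) := by
        rw [IntegrableOn, Measure.volume_eq_prod, ← Measure.prod_restrict] at hSint
        rw [Measure.volume_eq_prod, ← Measure.prod_restrict]
        exact integral_prod _ hSint
    _ = ∫ ρ in Ioo 0 R, (2 * π * ρ) • circleAverage F 0 ρ := by
        refine setIntegral_congr_fun measurableSet_Ioo fun ρ _ => ?_
        rw [circleAverage_eq_integral_Ioo, integral_smul, smul_smul]
        congr 1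
        field_simp

end PolarCoordinates

lemma norm_inv_one_sub_conj_mul_sq_le {z w : ℂ} {r : ℝ} (hz : ‖z‖ ≤ 1) (hw : ‖w‖ ≤ r)
    (hr : r < 1) : ‖((1 - conj z * w) ^ 2)⁻¹‖ ≤ ((1 - r) ^ 2)⁻¹ := by
  have hzw : ‖conj z * w‖ ≤ r := by
    rw [norm_mul, RCLike.norm_conj]
    nlinarith [norm_nonneg z, norm_nonneg w]
  have hlower : 1 - r ≤ ‖1 - conj z * w‖ := by
    linarith [norm_sub_norm_le (1 : ℂ) (conj z * w), norm_one (α := ℂ)]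
  rw [norm_inv, norm_pow]
  exact inv_anti₀ (by nlinarith) (pow_le_pow_left₀ (by linarith) hlower 2)

theorem circleAverage_mul_inv_one_sub_conj_mul_sq {U : Set ℂ} (hU : IsOpen U) {f : ℂ → ℂ}
    (hf : DifferentiableOn ℂ f U) {ρ : ℝ} (hρ : 0 < ρ) (hρU : closedBall 0 ρ ⊆ U) {w : ℂ}
    (hw : ρ * ‖w‖ < 1) :
    circleAverage (fun z => f z * ((1 - conj z * w) ^ 2)⁻¹) 0 ρ
      = f (ρ ^ 2 * w) + ρ ^ 2 * w * deriv f (ρ ^ 2 * w) := by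
  set a : ℂ := ρ ^ 2 * w
  have ha : a ∈ ball (0 : ℂ) ρ := by
    rw [mem_ball_zero_iff, norm_mul, norm_pow, norm_real, Real.norm_of_nonneg hρ.le]
    nlinarith
  have hderiv : HasDerivAt (fun z => z * f z) (1 * f a + a * deriv f a) a :=
    (hasDerivAt_id a).mul
      (hf.differentiableAt (hU.mem_nhds (hρU (ball_subset_closedBall ha)))).hasDerivAt
  rw [one_mul] at hderiv
  rw [circleAverage_eq_circleIntegral hρ.ne', ← hderiv.deriv,
    ← two_pi_I_inv_smul_circleIntegral_sub_sq_inv_smul_of_differentiable hU hρU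
      (f := fun z => z * f z) (differentiableOn_id.mul hf) ha]
  congr 1
  refine circleIntegral.integral_congr hρ.le fun z hz => ?_
  have hz0 : z ≠ 0 := ne_of_mem_sphere hz hρ.ne'
  have hza : z - a ≠ 0 := sub_ne_zero.mpr fun h => (sphere_disjoint_ball.ne_of_mem hz ha) h
  have hconj : conj z = ρ ^ 2 / z := by
    rw [eq_div_iff hz0, mul_comm, mul_conj, normSq_eq_norm_sq, mem_sphere_zero_iff_norm.mp hz]
    push_cast; ring
  have hkernel : 1 - conj z * w = (z - a) / z := by
    rw [hconj]; field_simp; rfl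
  simp only [smul_eq_mul, sub_zero, hkernel]
  field_simp

theorem radial_integral_eq_pi_mul {f : ℂ → ℂ} (hf : DifferentiableOn ℂ f (ball 0 1)) {w : ℂ}
    (hw : ‖w‖ < 1) :
    ∫ ρ in (0 : ℝ)..1, (2 * π * ρ) • (f (ρ ^ 2 * w) + ρ ^ 2 * w * deriv f (ρ ^ 2 * w))
      = π * f w := by
  have hmem : MapsTo (fun ρ : ℝ => (ρ : ℂ) ^ 2 * w) (uIcc 0 1) (ball 0 1) := by
    intro ρ hρ
    rw [uIcc_of_le zero_le_one] at hρ
    rw [mem_ball_zero_iff, norm_mul, norm_pow, norm_real, Real.norm_of_nonneg hρ.1]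
    nlinarith [pow_le_one₀ hρ.1 hρ.2 (n := 2), norm_nonneg w]
  have hderiv : ∀ ρ ∈ uIcc (0 : ℝ) 1, HasDerivAt (fun ρ : ℝ => (π : ℂ) * (ρ ^ 2 * f (ρ ^ 2 * w)))
      ((2 * π * ρ) • (f (ρ ^ 2 * w) + ρ ^ 2 * w * deriv f (ρ ^ 2 * w))) ρ := by
    intro ρ hρ
    have hf' := (hf.differentiableAt (isOpen_ball.mem_nhds (hmem hρ))).hasDerivAt
    have hcomp := hf'.comp (ρ : ℂ) ((hasDerivAt_pow 2 (ρ : ℂ)).mul_const w)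
    convert (((hasDerivAt_pow 2 (ρ : ℂ)).mul hcomp).const_mul (π : ℂ)).comp_ofReal using 1
    · rfl
    rw [real_smul, Function.comp_apply]
    push_cast
    ring
  have hcont : ContinuousOn (fun ρ : ℝ => (2 * π * ρ) •
      (f (ρ ^ 2 * w) + ρ ^ 2 * w * deriv f (ρ ^ 2 * w))) (uIcc 0 1) := by
    have hq : Continuous fun ρ : ℝ => (ρ : ℂ) ^ 2 * w := by fun_prop
    have hf_cont := hf.continuousOn.comp hq.continuousOn hmem
    have hf'_cont := (hf.analyticOnNhd isOpen_ball).deriv.continuousOn.comp hq.continuousOn hmem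
    exact (by fun_prop : Continuous fun ρ : ℝ => 2 * π * ρ).continuousOn.smul
      (hf_cont.add (hq.continuousOn.mul hf'_cont))
  rw [intervalIntegral.integral_eq_sub_of_hasDerivAt hderiv hcont.intervalIntegrable]
  simp

theorem integral_ball_mul_inv_one_sub_conj_mul_sq {f : ℂ → ℂ}
    (hfd : DifferentiableOn ℂ f (ball 0 1)) (hfi : IntegrableOn f (ball 0 1)) {w : ℂ}
    (hw : ‖w‖ < 1) :
    ∫ z in ball (0 : ℂ) 1, f z * ((1 - conj z * w) ^ 2)⁻¹ = π * f w := by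
  have hint : IntegrableOn (fun z => f z * ((1 - conj z * w) ^ 2)⁻¹) (ball 0 1) := by
    refine hfi.mul_bdd (c := ((1 - ‖w‖) ^ 2)⁻¹) (by fun_prop) ?_
    filter_upwards [ae_restrict_mem measurableSet_ball] with z hz
    exact norm_inv_one_sub_conj_mul_sq_le (mem_ball_zero_iff.mp hz).le le_rfl hw
  rw [integral_ball_eq_integral_smul_circleAverage hint, ← radial_integral_eq_pi_mul hfd hw,
    intervalIntegral.integral_of_le zero_le_one, integral_Ioc_eq_integral_Ioo]
  refine setIntegral_congr_fun measurableSet_Ioo fun ρ hρ => ?_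
  rw [circleAverage_mul_inv_one_sub_conj_mul_sq isOpen_ball hfd hρ.1
    (closedBall_subset_ball hρ.2) (by nlinarith [hρ.1, hρ.2, norm_nonneg w])]

lemma integrable_prod_mul_inv_one_sub_conj_mul_sq {f : ℂ → ℂ}
    (hfi : IntegrableOn f (ball 0 1)) {μ : Measure ℂ} [IsFiniteMeasure μ] {r : ℝ}
    (hμ : ∀ᵐ w ∂μ, ‖w‖ ≤ r) (hr : r < 1) :
    Integrable (Function.uncurry fun z w => f z * ((1 - conj z * w) ^ 2)⁻¹)
      ((volume.restrict (ball 0 1)).prod μ) := by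
  refine (hfi.comp_fst μ).mul_bdd (c := ((1 - r) ^ 2)⁻¹) (by fun_prop) ?_
  filter_upwards [Measure.quasiMeasurePreserving_fst.ae (ae_restrict_mem measurableSet_ball),
    Measure.quasiMeasurePreserving_snd.ae hμ] with p hz hw
  exact norm_inv_one_sub_conj_mul_sq_le (mem_ball_zero_iff.mp hz).le hw hr

theorem stmt11_general (r : ℝ) (hr1 : r < 1)
    (μ : Measure ℂ) [IsFiniteMeasure μ] (hsupp : μ (closedBall (0 : ℂ) r)ᶜ = 0)
    (M : ℂ → ℂ)
    (hM : ∀ z, M z = (1 / (Real.pi : ℂ)) * ∫ w, ((1 - (starRingEnd ℂ) z * w) ^ 2)⁻¹ ∂μ)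
    (f : ℂ → ℂ) (hfc : ContinuousOn f (closedBall (0 : ℂ) 1))
    (hfd : DifferentiableOn ℂ f (ball (0 : ℂ) 1)) :
    ∫ w, f w ∂μ = ∫ z in ball (0 : ℂ) 1, f z * M z := by
  have hμ : ∀ᵐ w ∂μ, ‖w‖ ≤ r := by
    filter_upwards [measure_eq_zero_iff_ae_notMem.mp hsupp] with w hw
    simpa using hw
  have hfi : IntegrableOn f (ball 0 1) :=
    (hfc.integrableOn_compact (isCompact_closedBall 0 1)).mono_set ball_subset_closedBall
  calc ∫ w, f w ∂μ
      = (π : ℂ)⁻¹ * ∫ w, π * f w ∂μ := by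
        rw [integral_const_mul, inv_mul_cancel_left₀ (ofReal_ne_zero.mpr pi_ne_zero)]
    _ = (π : ℂ)⁻¹ * ∫ w, (∫ z in ball 0 1, f z * ((1 - conj z * w) ^ 2)⁻¹) ∂μ := by
        congr 1
        exact integral_congr_ae (hμ.mono fun w hw =>
          (integral_ball_mul_inv_one_sub_conj_mul_sq hfd hfi (hw.trans_lt hr1)).symm)
    _ = (π : ℂ)⁻¹ * ∫ z in ball 0 1, ∫ w, f z * ((1 - conj z * w) ^ 2)⁻¹ ∂μ := by
        congr 1
        exact (integral_integral_swap
          (integrable_prod_mul_inv_one_sub_conj_mul_sq hfi hμ hr1)).symm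
    _ = ∫ z in ball (0 : ℂ) 1, f z * M z := by
        rw [← integral_const_mul]
        congr 1 with z
        rw [hM, integral_const_mul, one_div]
        ring

/-- Bergman-kernel area representation: for a finite positive Borel measure `μ` supported
in the closed disk of radius `r < 1` and `f` in the disk algebra,
`∫ f dμ = ∬_{𝔻} f(z) M(z) dx dy` with `M(z) = (1/π) ∫ 1/(1 − conj(z) w)² dμ(w)`. -/
theorem stmt11 (r : ℝ) (hr0 : 0 < r) (hr1 : r < 1)
    (μ : Measure ℂ) [IsFiniteMeasure μ] (hsupp : μ (closedBall (0 : ℂ) r)ᶜ = 0)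
    (M : ℂ → ℂ)
    (hM : ∀ z, M z = (1 / (Real.pi : ℂ)) * ∫ w, ((1 - (starRingEnd ℂ) z * w) ^ 2)⁻¹ ∂μ)
    (f : ℂ → ℂ) (hfc : ContinuousOn f (closedBall (0 : ℂ) 1))
    (hfd : DifferentiableOn ℂ f (ball (0 : ℂ) 1)) :
    ∫ w, f w ∂μ = ∫ z in ball (0 : ℂ) 1, f z * M z :=
  stmt11_general r hr1 μ hsupp M hM f hfc hfd
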